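/- arXiv:2509.25014 — 3 statements merged into one kernel-verified Lean document; each statement's English description precedes it below -/
import Mathlib

section
/- (Sign-coherence additivity of tropical mutation) Let ε be a rational exchange matrix on a finite index set I, k ∈ I, and let ξ_1, ξ_2 ∈ ℝ^I satisfy the tropical mutation relation a'_k(ξ) = -a_k(ξ) + max(Σ_j [ε_{kj}]_+ a_j(ξ), Σ_j [-ε_{kj}]_+ a_j(ξ)) and be sign-coherent for x_k = Σ_i ε_{ki} a_i, i.e. x_k(ξ_1)·x_k(ξ_2) ≥ 0. Then for any m_1, m_2 ≥ 0, the point ξ with coordinates a_i(ξ) = m_1 a_i(ξ_1) + m_2 a_i(ξ_2) and a'_i(ξ) = m_1 a'_i(ξ_1) + m_2 a'_i(ξ_2) also satisfies the tropical mutation relation. -/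
open Finset

/-- `a'` is obtained from `a` by the tropical cluster mutation in direction `k`
for the exchange matrix `ε`. -/
def MutRel {I : Type*} [Fintype I] (ε : I → I → ℚ) (k : I) (a a' : I → ℝ) : Prop :=
  (∀ i, i ≠ k → a' i = a i) ∧
    a' k = -a k + max (∑ j, max ((ε k j : ℝ)) 0 * a j)
                      (∑ j, max (-(ε k j : ℝ)) 0 * a j)

lemma max_add_sign_coherent (a b m₁ m₂ : ℝ) (hab : 0 ≤ a * b)
    (hm₁ : 0 ≤ m₁) (hm₂ : 0 ≤ m₂) :
    max (m₁ * a + m₂ * b) 0 = m₁ * max a 0 + m₂ * max b 0 := by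
  rcases mul_nonneg_iff.mp hab with ⟨ha, hb⟩ | ⟨ha, hb⟩
  · rw [max_eq_left ha, max_eq_left hb, max_eq_left (by positivity)]
  · have h1 : m₁ * a ≤ 0 := mul_nonpos_of_nonneg_of_nonpos hm₁ ha
    have h2 : m₂ * b ≤ 0 := mul_nonpos_of_nonneg_of_nonpos hm₂ hb
    rw [max_eq_right ha, max_eq_right hb, max_eq_right (by linarith)]
    ring

lemma max_as_add (P N : ℝ) : max P N = N + max (P - N) 0 := by
  rcases le_total P N with h | h
  · simp [max_eq_right h, max_eq_right (by linarith : P - N ≤ 0)]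
  · rw [max_eq_left h, max_eq_left (by linarith : (0:ℝ) ≤ P - N)]; ring

/-- Sign-coherence additivity of the tropical mutation rule: if `ξ₁, ξ₂` (with mutated
coordinates `ξ₁', ξ₂'`) satisfy the tropical mutation relation and are sign-coherent for
`x_k = ∑ᵢ ε_{ki} aᵢ`, then any nonnegative combination
`a(ξ) = m₁ a(ξ₁) + m₂ a(ξ₂)`, `a'(ξ) = m₁ a'(ξ₁) + m₂ a'(ξ₂)` also satisfies the
tropical mutation relation. -/
theorem sign_coherence_tropical_mutation
    {I : Type*} [Fintype I]
    (ε : I → I → ℚ) (k : I)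
    (ξ₁ ξ₁' ξ₂ ξ₂' : I → ℝ)
    (h1 : MutRel ε k ξ₁ ξ₁') (h2 : MutRel ε k ξ₂ ξ₂')
    (hsc : 0 ≤ (∑ i, (ε k i : ℝ) * ξ₁ i) * (∑ i, (ε k i : ℝ) * ξ₂ i))
    (m₁ m₂ : ℝ) (hm₁ : 0 ≤ m₁) (hm₂ : 0 ≤ m₂) :
    MutRel ε k (fun i => m₁ * ξ₁ i + m₂ * ξ₂ i)
      (fun i => m₁ * ξ₁' i + m₂ * ξ₂' i) := by
  obtain ⟨h1a, h1b⟩ := h1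
  obtain ⟨h2a, h2b⟩ := h2
  refine ⟨fun i hi => by
    show m₁ * ξ₁' i + m₂ * ξ₂' i = m₁ * ξ₁ i + m₂ * ξ₂ i
    rw [h1a i hi, h2a i hi], ?_⟩
  -- difference of positive/negative parts equals the full sum
  have hPN : ∀ a : I → ℝ,
      (∑ j, max ((ε k j : ℝ)) 0 * a j) - (∑ j, max (-(ε k j : ℝ)) 0 * a j)
        = ∑ i, (ε k i : ℝ) * a i := by
    intro a
    rw [← Finset.sum_sub_distrib]
    refine Finset.sum_congr rfl fun j _ => ?_
    rcases le_total ((ε k j : ℝ)) 0 with h | h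
    · rw [max_eq_right h, max_eq_left (by linarith)]; ring
    · rw [max_eq_left h, max_eq_right (by linarith)]; ring
  have hkey : ∀ a : I → ℝ,
      max (∑ j, max ((ε k j : ℝ)) 0 * a j) (∑ j, max (-(ε k j : ℝ)) 0 * a j)
        = (∑ j, max (-(ε k j : ℝ)) 0 * a j) + max (∑ i, (ε k i : ℝ) * a i) 0 := by
    intro a; rw [max_as_add, hPN]
  have hPlin : (∑ j, max ((ε k j : ℝ)) 0 * (m₁ * ξ₁ j + m₂ * ξ₂ j))
      = m₁ * (∑ j, max ((ε k j : ℝ)) 0 * ξ₁ j) + m₂ * (∑ j, max ((ε k j : ℝ)) 0 * ξ₂ j) := by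
    simp only [Finset.mul_sum, ← Finset.sum_add_distrib]
    exact Finset.sum_congr rfl fun j _ => by ring
  have hNlin : (∑ j, max (-(ε k j : ℝ)) 0 * (m₁ * ξ₁ j + m₂ * ξ₂ j))
      = m₁ * (∑ j, max (-(ε k j : ℝ)) 0 * ξ₁ j) + m₂ * (∑ j, max (-(ε k j : ℝ)) 0 * ξ₂ j) := by
    simp only [Finset.mul_sum, ← Finset.sum_add_distrib]
    exact Finset.sum_congr rfl fun j _ => by ring
  have hxlin : (∑ i, (ε k i : ℝ) * (m₁ * ξ₁ i + m₂ * ξ₂ i))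
      = m₁ * (∑ i, (ε k i : ℝ) * ξ₁ i) + m₂ * (∑ i, (ε k i : ℝ) * ξ₂ i) := by
    simp only [Finset.mul_sum, ← Finset.sum_add_distrib]
    exact Finset.sum_congr rfl fun j _ => by ring
  show m₁ * ξ₁' k + m₂ * ξ₂' k
      = -(m₁ * ξ₁ k + m₂ * ξ₂ k) +
        max (∑ j, max ((ε k j : ℝ)) 0 * (m₁ * ξ₁ j + m₂ * ξ₂ j))
            (∑ j, max (-(ε k j : ℝ)) 0 * (m₁ * ξ₁ j + m₂ * ξ₂ j))
  rw [h1b, h2b, hkey ξ₁, hkey ξ₂,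
    hkey (fun i => m₁ * ξ₁ i + m₂ * ξ₂ i), hNlin, hxlin,
    max_add_sign_coherent _ _ _ _ hsc hm₁ hm₂]
  ring
end

section
/- With x_1 = a_2+a_3-a_4-a_5-a_7 ≥ 0 and 2x_1 + x_2 ≤ 0 (where x_2 = a_4+a_6+2a_7-2a_1-a_8), setting n_1 = x_1, n_2 = -x_2 - 2x_1, k_1 = w_1, l_1 = w_2, k_2 = w'_1, l_2 = w'_2, k_3 = w''_1, l_3 = w''_2 (the potentials given by the explicit min-formulas), the map (a_1,…,a_8) ↦ (n_1, n_2, k_1, l_1, k_2, l_2, k_3, l_3) restricted to the chamber x_1 ≥ 0, 2x_1 + x_2 ≤ 0 is injective. -/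
/- Tropical coordinates on the triangle, as functions of the A-coordinates
`a : Fin 8 → ℚ` (with `a i` denoting `a_{i+1}`). -/

def x1 (a : Fin 8 → ℚ) : ℚ := a 1 + a 2 - a 3 - a 4 - a 6
def x2 (a : Fin 8 → ℚ) : ℚ := a 3 + a 5 + 2 * a 6 - 2 * a 0 - a 7
def w1 (a : Fin 8 → ℚ) : ℚ := min (a 1 + a 3 - 2 * a 0) (a 1 + a 7 - a 5 - 2 * a 6)
def w2 (a : Fin 8 → ℚ) : ℚ := min (a 0 + a 2 - a 3 - a 4) (a 0 + a 6 - a 1)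
def w1' (a : Fin 8 → ℚ) : ℚ :=
  min (min (a 1 + a 5 - 2 * a 4 - a 7) (2 * a 0 + a 1 - a 3 - 2 * a 4 - 2 * a 6))
      (min (2 * a 0 - a 2 - a 4 - a 6) (2 * a 0 + a 3 - a 1 - 2 * a 2))
def w2' (a : Fin 8 → ℚ) : ℚ := a 2 + a 4 - a 0
def w1'' (a : Fin 8 → ℚ) : ℚ := a 5 + a 7 - a 1
def w2'' (a : Fin 8 → ℚ) : ℚ :=
  min (a 1 + a 6 - a 0 - a 7)
      (min (a 0 + a 1 - a 3 - a 5 - a 6) (a 0 + a 4 - a 2 - a 5))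

lemma w1_eq (a : Fin 8 → ℚ) (h1 : 0 ≤ x1 a) (h2 : 2 * x1 a + x2 a ≤ 0) :
    w1 a = a 1 + a 3 - 2 * a 0 := by
  simp only [x1, x2] at h1 h2; exact min_eq_left (by linarith)

lemma w2_eq (a : Fin 8 → ℚ) (h1 : 0 ≤ x1 a) (h2 : 2 * x1 a + x2 a ≤ 0) :
    w2 a = a 0 + a 6 - a 1 := by
  simp only [x1, x2] at h1 h2; exact min_eq_right (by linarith)

lemma w1'_eq (a : Fin 8 → ℚ) (h1 : 0 ≤ x1 a) (h2 : 2 * x1 a + x2 a ≤ 0) :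
    w1' a = a 1 + a 5 - 2 * a 4 - a 7 := by
  simp only [x1, x2] at h1 h2
  unfold w1'
  rw [show min (a 1 + a 5 - 2 * a 4 - a 7) (2 * a 0 + a 1 - a 3 - 2 * a 4 - 2 * a 6)
        = a 1 + a 5 - 2 * a 4 - a 7 from min_eq_left (by linarith)]
  exact min_eq_left (le_min (by linarith) (by linarith))

lemma w2''_eq (a : Fin 8 → ℚ) (h1 : 0 ≤ x1 a) (h2 : 2 * x1 a + x2 a ≤ 0) :
    w2'' a = a 1 + a 6 - a 0 - a 7 := by
  simp only [x1, x2] at h1 h2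
  exact min_eq_left (le_min (by linarith) (by linarith))

/-- On the chamber `x₁ ≥ 0`, `2x₁ + x₂ ≤ 0`, the map
`(a₁,…,a₈) ↦ (n₁, n₂, k₁, l₁, k₂, l₂, k₃, l₃)` with `n₁ = x₁`, `n₂ = -x₂ - 2x₁`,
`k₁ = w₁`, `l₁ = w₂`, `k₂ = w'₁`, `l₂ = w'₂`, `k₃ = w''₁`, `l₃ = w''₂` is injective. -/
theorem chamber_parameters_injective :
    Set.InjOn
      (fun a : Fin 8 → ℚ =>
        (![x1 a, -x2 a - 2 * x1 a, w1 a, w2 a, w1' a, w2' a, w1'' a, w2'' a] :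
          Fin 8 → ℚ))
      {a : Fin 8 → ℚ | 0 ≤ x1 a ∧ 2 * x1 a + x2 a ≤ 0} := by
  rintro a ⟨ha1, ha2⟩ b ⟨hb1, hb2⟩ h
  have e0 : x1 a = x1 b := congrFun h 0
  have e1 : -x2 a - 2 * x1 a = -x2 b - 2 * x1 b := congrFun h 1
  have e2 : w1 a = w1 b := congrFun h 2
  have e3 : w2 a = w2 b := congrFun h 3
  have e4 : w1' a = w1' b := congrFun h 4
  have e5 : w2' a = w2' b := congrFun h 5
  have e6 : w1'' a = w1'' b := congrFun h 6
  have e7 : w2'' a = w2'' b := congrFun h 7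
  rw [w1_eq a ha1 ha2, w1_eq b hb1 hb2] at e2
  rw [w2_eq a ha1 ha2, w2_eq b hb1 hb2] at e3
  rw [w1'_eq a ha1 ha2, w1'_eq b hb1 hb2] at e4
  rw [w2''_eq a ha1 ha2, w2''_eq b hb1 hb2] at e7
  simp only [x1, x2] at e0 e1
  simp only [w2'] at e5
  simp only [w1''] at e6
  have g0 : a 0 = b 0 := by linarith
  have g1 : a 1 = b 1 := by linarith
  have g2 : a 2 = b 2 := by linarith
  have g3 : a 3 = b 3 := by linarith
  have g4 : a 4 = b 4 := by linarith
  have g5 : a 5 = b 5 := by linarith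
  have g6 : a 6 = b 6 := by linarith
  have g7 : a 7 = b 7 := by linarith
  funext i
  fin_cases i
  exacts [g0, g1, g2, g3, g4, g5, g6, g7]
end

section
/- For the weighted quiver mutation rule with weights taking values in {1, d}: if ε D is skew-symmetric for D = diag(d_i) and σ_{ij} = d_i^{-1} ε_{ij} gcd(d_i, d_j), then the matrix mutation ε' = μ_k ε corresponds to σ'_{ij} = -σ_{ij} when i = k or j = k, and σ'_{ij} = σ_{ij} + ([σ_{ik}]_+[σ_{kj}]_+ - [-σ_{ik}]_+[-σ_{kj}]_+)·α_{ij}^k otherwise, where α_{ij}^k = d if d_i = d_j ≠ d_k and α_{ij}^k = 1 otherwise. -/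
lemma pull_max (c x : ℚ) (hc : 0 ≤ c) : max (c * x) 0 = c * max x 0 := by
  rcases le_total x 0 with h | h
  · rw [max_eq_right (mul_nonpos_of_nonneg_of_nonpos hc h), max_eq_right h, mul_zero]
  · rw [max_eq_left (mul_nonneg hc h), max_eq_left h]

/-- Weighted quiver mutation rule.  Suppose the weights `d i` take values in `{1, dv}`
with `dv ≥ 2`, `ε D` is skew-symmetric for `D = diag(dᵢ)`, and
`σ_{ij} = dᵢ⁻¹ ε_{ij} gcd(dᵢ, dⱼ)`.  If `ε'` is the matrix mutation of `ε` at `k` and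
`σ'` is defined from `ε'` by the same formula, then `σ'` is obtained from `σ` by the
weighted mutation rule with correction factor `α_{ij}^k = dv` if `dᵢ = dⱼ ≠ d_k`
and `1` otherwise. -/
theorem weighted_quiver_mutation
    {I : Type*} [DecidableEq I]
    (dv : ℤ) (hdv : 2 ≤ dv)
    (d : I → ℤ) (hd : ∀ i, d i = 1 ∨ d i = dv)
    (ε : I → I → ℚ)
    (hskew : ∀ i j, ε i j * (d j : ℚ) = -(ε j i * (d i : ℚ)))
    (k : I)
    (ε' : I → I → ℚ)
    (hε' : ∀ i j, ε' i j =
      if i = k ∨ j = k then -ε i j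
      else ε i j + max (ε i k) 0 * max (ε k j) 0
        - max (-ε i k) 0 * max (-ε k j) 0)
    (σ σ' : I → I → ℚ)
    (hσ : ∀ i j, σ i j = (d i : ℚ)⁻¹ * ε i j * (Int.gcd (d i) (d j) : ℚ))
    (hσ' : ∀ i j, σ' i j = (d i : ℚ)⁻¹ * ε' i j * (Int.gcd (d i) (d j) : ℚ)) :
    ∀ i j, σ' i j =
      if i = k ∨ j = k then -σ i j
      else σ i j +
        (max (σ i k) 0 * max (σ k j) 0 - max (-σ i k) 0 * max (-σ k j) 0) *
          (if d i = d j ∧ d i ≠ d k then (dv : ℚ) else 1) := by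
  intro i j
  rw [hσ', hε', hσ]
  by_cases h : i = k ∨ j = k
  · rw [if_pos h, if_pos h]; ring
  · rw [if_neg h, if_neg h]
    rw [hσ, hσ]
    have hdvQ : (0:ℚ) < (dv:ℚ) := by exact_mod_cast lt_of_lt_of_le (by norm_num) hdv
    have hdvne : ((dv:ℤ):ℚ) ≠ 0 := ne_of_gt hdvQ
    have h1dv : (1:ℤ) ≠ dv := by omega
    set c1 : ℚ := (d i : ℚ)⁻¹ * (Int.gcd (d i) (d k) : ℚ) with hc1def
    set c2 : ℚ := (d k : ℚ)⁻¹ * (Int.gcd (d k) (d j) : ℚ) with hc2def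
    have hdipos : (0:ℚ) < (d i : ℚ) := by
      rcases hd i with h' | h' <;> rw [h'] <;> [norm_num; exact hdvQ]
    have hdkpos : (0:ℚ) < (d k : ℚ) := by
      rcases hd k with h' | h' <;> rw [h'] <;> [norm_num; exact hdvQ]
    have hc1 : 0 ≤ c1 := mul_nonneg (inv_nonneg.2 hdipos.le) (Nat.cast_nonneg _)
    have hc2 : 0 ≤ c2 := mul_nonneg (inv_nonneg.2 hdkpos.le) (Nat.cast_nonneg _)
    have e1 : (d i:ℚ)⁻¹ * ε i k * (Int.gcd (d i) (d k):ℚ) = c1 * ε i k := by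
      rw [hc1def]; ring
    have e2 : (d k:ℚ)⁻¹ * ε k j * (Int.gcd (d k) (d j):ℚ) = c2 * ε k j := by
      rw [hc2def]; ring
    rw [e1, e2]
    have e1' : -(c1 * ε i k) = c1 * (-ε i k) := by ring
    have e2' : -(c2 * ε k j) = c2 * (-ε k j) := by ring
    rw [e1', e2', pull_max c1 _ hc1, pull_max c2 _ hc2, pull_max c1 _ hc1,
      pull_max c2 _ hc2]
    have hgcd : ((Int.gcd dv dv : ℕ) : ℚ) = (dv : ℚ) := by
      rw [Int.gcd_self, Nat.cast_natAbs]; exact_mod_cast abs_of_nonneg (by omega : (0:ℤ) ≤ dv)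
    have key : (d i:ℚ)⁻¹ * (Int.gcd (d i) (d j) : ℚ) =
        c1 * c2 * (if d i = d j ∧ d i ≠ d k then (dv : ℚ) else 1) := by
      rw [hc1def, hc2def]
      rcases hd i with hi | hi <;> rcases hd j with hj | hj <;> rcases hd k with hk | hk <;>
        simp only [hi, hj, hk, Int.one_gcd, Int.gcd_one, Nat.cast_one, Int.cast_one,
          hgcd, h1dv, h1dv.symm, ne_eq, not_true_eq_false, not_false_eq_true,
          and_true, and_false, if_true, if_false, inv_one, one_mul, mul_one,
          not_not] <;>
        field_simp
    linear_combination
      (max (ε i k) 0 * max (ε k j) 0 - max (-ε i k) 0 * max (-ε k j) 0) * key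
end
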